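/- Suppose V : ℝ^d → ℝ satisfies V(x) − V(x*) ≤ L·|x − x*|^β for all x, where x* is a global minimizer, β ∈ (0,1), L > 0. Let p_η^{(1)}(x) = (Γ((d+1)/2)/π^{(d+1)/2})·η·(|x|² + η²)^{-(d+1)/2} be the d-dimensional Cauchy density with scale η. Then ∫ (V(x+y) − V(x*)) p_η^{(1)}(x) dx ≤ L|y − x*|^β + (Γ((d+1)/2)Γ((1−β)/2)/(Γ((d+1−β)/2)√π))·L·η^β for every y ∈ ℝ^d. -/

import Mathlib

/-
Subadditivity of `t ↦ t ^ β` gives `V (x + y) - V x* ≤ L ‖x‖ ^ β + L ‖y - x*‖ ^ β`, so the integral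
is at most `L ‖y - x*‖ ^ β + L E ‖X‖ ^ β` for `X` Cauchy with scale `η`. In polar coordinates the
fractional moment is a Beta integral in the radius, evaluated by writing
`(r² + η²) ^ (-c) = Γ(c)⁻¹ ∫ t ^ (c - 1) exp (-(r² + η²) t) dt` and integrating `r` first:
`E ‖X‖ ^ β = Γ((d + β) / 2) Γ((1 - β) / 2) / (Γ(d / 2) √π) η ^ β`. Log-convexity of `Γ` gives
`Γ((d + β) / 2) Γ((d + 1 - β) / 2) ≤ Γ(d / 2) Γ((d + 1) / 2)`, which yields the stated constant.
-/

open MeasureTheory Real Set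

/-- d-dimensional Cauchy density with scale `η`. -/
noncomputable def cauchyDensity (d : ℕ) (η : ℝ) (x : EuclideanSpace ℝ (Fin d)) : ℝ :=
  (Real.Gamma (((d : ℝ) + 1) / 2) / Real.pi ^ (((d : ℝ) + 1) / 2)) * η *
    (‖x‖ ^ 2 + η ^ 2) ^ (-(((d : ℝ) + 1) / 2))

theorem Real.Gamma_add_mul_mul_Gamma_add_le {x h θ : ℝ} (hx : 0 < x) (hh : 0 ≤ h)
    (hθ₀ : 0 ≤ θ) (hθ₁ : θ ≤ 1) :
    Gamma (x + θ * h) * Gamma (x + (1 - θ) * h) ≤ Gamma x * Gamma (x + h) := by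
  have hx' : x ∈ Ioi (0 : ℝ) := hx
  have hxh : x + h ∈ Ioi (0 : ℝ) := by simp only [mem_Ioi]; linarith
  have h₁ := convexOn_log_Gamma.2 hx' hxh (by linarith : 0 ≤ 1 - θ) hθ₀ (by ring)
  have h₂ := convexOn_log_Gamma.2 hx' hxh hθ₀ (by linarith : 0 ≤ 1 - θ) (by ring)
  simp only [smul_eq_mul, Function.comp_apply] at h₁ h₂
  rw [show (1 - θ) * x + θ * (x + h) = x + θ * h by ring] at h₁
  rw [show θ * x + (1 - θ) * (x + h) = x + (1 - θ) * h by ring] at h₂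
  have : 0 ≤ (1 - θ) * h := mul_nonneg (by linarith) hh
  rw [← log_le_log_iff (by positivity) (by positivity), log_mul (by positivity) (by positivity),
    log_mul (by positivity) (by positivity)]
  linarith

noncomputable def gammaSubordinand (a c η : ℝ) (r t : ℝ) : ℝ :=
  r ^ (a - 1) * (t ^ (c - 1) * exp (-((r ^ 2 + η ^ 2) * t)))

section Radial

variable {a c η : ℝ}

lemma gammaSubordinand_eq (r t : ℝ) : gammaSubordinand a c η r t =
    t ^ (c - 1) * exp (-(η ^ 2 * t)) * (r ^ (a - 1) * exp (-t * r ^ (2 : ℝ))) := by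
  rw [gammaSubordinand, rpow_two, show -((r ^ 2 + η ^ 2) * t) = -(η ^ 2 * t) + -t * r ^ 2 by ring,
    exp_add]
  ring

lemma integral_gammaSubordinand_right (hc : 0 < c) (hη : 0 < η) (r : ℝ) :
    ∫ t in Ioi 0, gammaSubordinand a c η r t =
      Gamma c * (r ^ (a - 1) * (r ^ 2 + η ^ 2) ^ (-c)) := by
  have hb : 0 < r ^ 2 + η ^ 2 := by positivity
  simp_rw [gammaSubordinand]
  rw [integral_const_mul, integral_rpow_mul_exp_neg_mul_Ioi hc hb, one_div,
    inv_rpow hb.le, ← rpow_neg hb.le]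
  ring

lemma integral_gammaSubordinand_left (ha : 0 < a) {t : ℝ} (ht : 0 < t) :
    ∫ r in Ioi 0, gammaSubordinand a c η r t =
      Gamma (a / 2) / 2 * (t ^ (c - a / 2 - 1) * exp (-(η ^ 2 * t))) := by
  simp_rw [gammaSubordinand_eq]
  rw [integral_const_mul,
    integral_rpow_mul_exp_neg_mul_rpow two_pos (by linarith) ht,
    show c - a / 2 - 1 = (c - 1) + -(a - 1 + 1) / 2 by ring, rpow_add ht,
    show (a - 1 + 1) / 2 = a / 2 by ring]
  ring

lemma integrable_gammaSubordinand (ha : 0 < a) (hac : a < 2 * c) (hη : 0 < η) :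
    Integrable (Function.uncurry (gammaSubordinand a c η))
      ((volume.restrict (Ioi 0)).prod (volume.restrict (Ioi 0))) := by
  have hmeas : Measurable (Function.uncurry (gammaSubordinand a c η)) := by
    unfold gammaSubordinand Function.uncurry; fun_prop
  rw [integrable_prod_iff' hmeas.aestronglyMeasurable]
  constructor
  · filter_upwards [ae_restrict_mem measurableSet_Ioi] with t ht
    have h := (integrableOn_rpow_mul_exp_neg_mul_rpow (p := 2) (s := a - 1) (by linarith)
      two_pos ht).const_mul (t ^ (c - 1) * exp (-(η ^ 2 * t)))
    simpa only [Function.uncurry_apply_pair, gammaSubordinand_eq] using h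
  · have h := (integrableOn_rpow_mul_exp_neg_mul_rpow (p := 1) (s := c - a / 2 - 1)
      (b := η ^ 2) (by linarith) one_pos (by positivity)).const_mul (Gamma (a / 2) / 2)
    refine IntegrableOn.congr_fun h (fun t (ht : 0 < t) => ?_) measurableSet_Ioi
    simp only [Function.uncurry_apply_pair, rpow_one, neg_mul]
    rw [← integral_gammaSubordinand_left ha ht]
    refine setIntegral_congr_fun measurableSet_Ioi fun r (hr : 0 < r) => ?_
    have : 0 ≤ gammaSubordinand a c η r t := by unfold gammaSubordinand; positivity
    exact (norm_of_nonneg this).symm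

theorem integrableOn_rpow_mul_sq_add_sq_rpow_neg (ha : 0 < a) (hac : a < 2 * c) (hη : 0 < η) :
    IntegrableOn (fun r : ℝ => r ^ (a - 1) * (r ^ 2 + η ^ 2) ^ (-c)) (Ioi 0) := by
  have hc : 0 < c := by linarith
  have h := ((integrable_gammaSubordinand ha hac hη).integral_prod_left).const_mul (Gamma c)⁻¹
  simp only [Function.uncurry_apply_pair, integral_gammaSubordinand_right hc hη,
    inv_mul_cancel_left₀ (Gamma_pos_of_pos hc).ne'] at h
  exact h

theorem integral_rpow_mul_sq_add_sq_rpow_neg (ha : 0 < a) (hac : a < 2 * c) (hη : 0 < η) :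
    ∫ r in Ioi 0, r ^ (a - 1) * (r ^ 2 + η ^ 2) ^ (-c) =
      η ^ (a - 2 * c) * Gamma (a / 2) * Gamma (c - a / 2) / (2 * Gamma c) := by
  have hc : 0 < c := by linarith
  have hswap := integral_integral_swap (integrable_gammaSubordinand ha hac hη)
  simp_rw [integral_gammaSubordinand_right hc hη] at hswap
  rw [setIntegral_congr_fun measurableSet_Ioi fun t (ht : 0 < t) =>
      integral_gammaSubordinand_left (c := c) (η := η) ha ht, integral_const_mul,
    integral_const_mul, integral_rpow_mul_exp_neg_mul_Ioi (by linarith) (by positivity)] at hswap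
  have hη2 : (1 / η ^ 2) ^ (c - a / 2) = η ^ (a - 2 * c) := by
    rw [one_div, ← rpow_natCast, ← rpow_neg_one, ← rpow_mul hη.le, ← rpow_mul hη.le]
    norm_num; ring_nf
  rw [hη2] at hswap
  rw [eq_div_iff (by positivity)]
  linear_combination 2 * hswap

end Radial

section Cauchy

variable {d : ℕ} {η s : ℝ}

lemma cauchyDensity_nonneg (hη : 0 ≤ η) (x : EuclideanSpace ℝ (Fin d)) :
    0 ≤ cauchyDensity d η x := by
  unfold cauchyDensity; positivity

noncomputable def cauchyRadialMoment (d : ℕ) (η s r : ℝ) : ℝ :=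
  r ^ s * ((Gamma (((d : ℝ) + 1) / 2) / π ^ (((d : ℝ) + 1) / 2)) * η *
    (r ^ 2 + η ^ 2) ^ (-(((d : ℝ) + 1) / 2)))

lemma pow_smul_cauchyRadialMoment (hd : 1 ≤ d) {r : ℝ} (hr : 0 < r) :
    r ^ (d - 1) • cauchyRadialMoment d η s r =
      Gamma (((d : ℝ) + 1) / 2) / π ^ (((d : ℝ) + 1) / 2) * η *
        (r ^ ((d + s) - 1) * (r ^ 2 + η ^ 2) ^ (-(((d : ℝ) + 1) / 2))) := by
  rw [smul_eq_mul, cauchyRadialMoment, ← rpow_natCast, Nat.cast_sub hd, Nat.cast_one,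
    show (d : ℝ) + s - 1 = (d - 1) + s by ring, rpow_add hr]
  ring

lemma integrable_norm_rpow_mul_cauchyDensity (hd : 1 ≤ d) (hs : -d < s) (hs₁ : s < 1)
    (hη : 0 < η) : Integrable (fun x => ‖x‖ ^ s * cauchyDensity d η x) := by
  have : NeZero d := ⟨by omega⟩
  refine (integrable_fun_norm_addHaar volume (f := cauchyRadialMoment d η s)).2 ?_
  rw [finrank_euclideanSpace_fin]
  refine IntegrableOn.congr_fun ((integrableOn_rpow_mul_sq_add_sq_rpow_neg (a := d + s)
    (c := ((d : ℝ) + 1) / 2) (by linarith) (by linarith) hη).const_mul _)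
    (fun r hr => (pow_smul_cauchyRadialMoment hd hr).symm) measurableSet_Ioi

lemma integral_norm_rpow_mul_cauchyDensity (hd : 1 ≤ d) (hs : -d < s) (hs₁ : s < 1)
    (hη : 0 < η) : ∫ x, ‖x‖ ^ s * cauchyDensity d η x =
      Gamma ((d + s) / 2) * Gamma ((1 - s) / 2) / (Gamma (d / 2) * √π) * η ^ s := by
  have : NeZero d := ⟨by omega⟩
  have hd' : (0 : ℝ) < d := by exact_mod_cast hd
  change ∫ x, cauchyRadialMoment d η s ‖x‖ = _
  rw [integral_fun_norm_addHaar volume, finrank_euclideanSpace_fin,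
    setIntegral_congr_fun measurableSet_Ioi fun r hr => pow_smul_cauchyRadialMoment hd hr,
    integral_const_mul, integral_rpow_mul_sq_add_sq_rpow_neg (by linarith) (by linarith) hη,
    measureReal_def, EuclideanSpace.volume_ball, Fintype.card_fin, ENNReal.ofReal_one, one_pow,
    one_mul, ENNReal.toReal_ofReal (by positivity), Gamma_add_one (by positivity),
    nsmul_eq_mul, smul_eq_mul]
  have hπ : π ^ (((d : ℝ) + 1) / 2) = √π ^ d * √π := by
    rw [sqrt_eq_rpow, ← rpow_natCast, ← rpow_mul pi_pos.le, ← rpow_add pi_pos]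
    ring_nf
  rw [hπ, show (1 - s) / 2 = ((d : ℝ) + 1) / 2 - (d + s) / 2 by ring,
    show (d : ℝ) + s - 2 * ((d + 1) / 2) = s - 1 by ring, rpow_sub_one hη.ne']
  field_simp

lemma integrable_cauchyDensity (hd : 1 ≤ d) (hη : 0 < η) : Integrable (cauchyDensity d η) := by
  simpa using integrable_norm_rpow_mul_cauchyDensity (s := 0) hd (by simp; omega) one_pos hη

lemma integral_cauchyDensity (hd : 1 ≤ d) (hη : 0 < η) : ∫ x, cauchyDensity d η x = 1 := by
  have h := integral_norm_rpow_mul_cauchyDensity (s := 0) hd (by simp; omega) one_pos hη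
  have : 0 < Gamma (d / 2) := by positivity
  simp only [rpow_zero, one_mul, add_zero, sub_zero, mul_one] at h
  rw [h, Gamma_one_half_eq]
  field_simp

lemma integral_norm_rpow_mul_cauchyDensity_le (hd : 1 ≤ d) (hs₀ : 0 ≤ s) (hs₁ : s < 1)
    (hη : 0 < η) : ∫ x, ‖x‖ ^ s * cauchyDensity d η x ≤
      Gamma ((d + 1) / 2) * Gamma ((1 - s) / 2) / (Gamma ((d + 1 - s) / 2) * √π) * η ^ s := by
  have hd' : (0 : ℝ) < d := by exact_mod_cast hd
  have hΓ := Gamma_add_mul_mul_Gamma_add_le (x := d / 2) (h := 1 / 2) (θ := s) (by positivity)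
    (by norm_num) hs₀ hs₁.le
  rw [show (d : ℝ) / 2 + s * (1 / 2) = (d + s) / 2 by ring,
    show (d : ℝ) / 2 + (1 - s) * (1 / 2) = (d + 1 - s) / 2 by ring,
    show (d : ℝ) / 2 + 1 / 2 = (d + 1) / 2 by ring] at hΓ
  have : 0 < Gamma ((1 - s) / 2) := Gamma_pos_of_pos (by linarith)
  have : 0 < Gamma ((d + 1 - s) / 2) := Gamma_pos_of_pos (by linarith)
  rw [integral_norm_rpow_mul_cauchyDensity hd (by linarith) hs₁ hη]
  gcongr ?_ * _
  rw [div_le_div_iff₀ (by positivity) (by positivity)]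
  linear_combination (Gamma ((1 - s) / 2) * √π) * hΓ

end Cauchy

lemma norm_add_sub_rpow_le {E : Type*} [SeminormedAddCommGroup E] (x y z : E) {β : ℝ}
    (hβ₀ : 0 ≤ β) (hβ₁ : β ≤ 1) : ‖x + y - z‖ ^ β ≤ ‖x‖ ^ β + ‖y - z‖ ^ β :=
  calc ‖x + y - z‖ ^ β ≤ (‖x‖ + ‖y - z‖) ^ β := by
        rw [add_sub_assoc]; gcongr; exact norm_add_le _ _
    _ ≤ ‖x‖ ^ β + ‖y - z‖ ^ β := rpow_add_le_add_rpow (norm_nonneg _) (norm_nonneg _) hβ₀ hβ₁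

theorem cauchy_rejection_bound_general (d : ℕ) (hd : 1 ≤ d) (β L η : ℝ)
    (hβ : β ∈ Set.Ioo (0 : ℝ) 1) (hL : 0 < L) (hη : 0 < η)
    (V : EuclideanSpace ℝ (Fin d) → ℝ)
    (xstar : EuclideanSpace ℝ (Fin d))
    (hV : ∀ x, V x - V xstar ≤ L * ‖x - xstar‖ ^ β) :
    ∀ y : EuclideanSpace ℝ (Fin d),
      (∫ x, (V (x + y) - V xstar) * cauchyDensity d η x) ≤
        L * ‖y - xstar‖ ^ β +
          (Real.Gamma (((d : ℝ) + 1) / 2) * Real.Gamma ((1 - β) / 2) /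
            (Real.Gamma (((d : ℝ) + 1 - β) / 2) * Real.sqrt Real.pi)) * L * η ^ β := by
  intro y
  obtain ⟨hβ₀, hβ₁⟩ := hβ
  set C := Gamma ((d + 1) / 2) * Gamma ((1 - β) / 2) / (Gamma ((d + 1 - β) / 2) * √π)
  have hC : 0 ≤ C := by
    have : 0 < Gamma ((1 - β) / 2) := Gamma_pos_of_pos (by linarith)
    have : 0 < Gamma ((d + 1 - β) / 2) :=
      Gamma_pos_of_pos (by linarith [Nat.cast_nonneg (α := ℝ) d])
    positivity
  by_cases hint : Integrable fun x => (V (x + y) - V xstar) * cauchyDensity d η x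
  swap
  · rw [integral_undef hint]; positivity
  have hmoment := integrable_norm_rpow_mul_cauchyDensity hd
    (by linarith [Nat.cast_nonneg (α := ℝ) d]) hβ₁ hη
  have hdensity := integrable_cauchyDensity hd hη
  calc ∫ x, (V (x + y) - V xstar) * cauchyDensity d η x
      ≤ ∫ x, L * (‖x‖ ^ β * cauchyDensity d η x) +
          L * ‖y - xstar‖ ^ β * cauchyDensity d η x := by
        refine integral_mono hint ((hmoment.const_mul _).add (hdensity.const_mul _)) fun x => ?_
        have hVx : V (x + y) - V xstar ≤ L * (‖x‖ ^ β + ‖y - xstar‖ ^ β) :=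
          (hV (x + y)).trans (by gcongr; exact norm_add_sub_rpow_le x y xstar hβ₀.le hβ₁.le)
        have := mul_le_mul_of_nonneg_right hVx (cauchyDensity_nonneg hη.le x)
        linarith
    _ = L * ‖y - xstar‖ ^ β + L * ∫ x, ‖x‖ ^ β * cauchyDensity d η x := by
        rw [integral_add (hmoment.const_mul _) (hdensity.const_mul _), integral_const_mul,
          integral_const_mul, integral_cauchyDensity hd hη]
        ring
    _ ≤ L * ‖y - xstar‖ ^ β + C * L * η ^ β := by
        grw [integral_norm_rpow_mul_cauchyDensity_le hd hβ₀.le hβ₁ hη]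
        linarith

theorem cauchy_rejection_bound (d : ℕ) (hd : 1 ≤ d) (β L η : ℝ)
    (hβ : β ∈ Set.Ioo (0 : ℝ) 1) (hL : 0 < L) (hη : 0 < η)
    (V : EuclideanSpace ℝ (Fin d) → ℝ) (hVmeas : Measurable V)
    (xstar : EuclideanSpace ℝ (Fin d)) (hmin : ∀ x, V xstar ≤ V x)
    (hV : ∀ x, V x - V xstar ≤ L * ‖x - xstar‖ ^ β) :
    ∀ y : EuclideanSpace ℝ (Fin d),
      (∫ x, (V (x + y) - V xstar) * cauchyDensity d η x) ≤
        L * ‖y - xstar‖ ^ β +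
          (Real.Gamma (((d : ℝ) + 1) / 2) * Real.Gamma ((1 - β) / 2) /
            (Real.Gamma (((d : ℝ) + 1 - β) / 2) * Real.sqrt Real.pi)) * L * η ^ β :=
  cauchy_rejection_bound_general d hd β L η hβ hL hη V xstar hV
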